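/- arXiv:2405.11516 — 2 statements merged into one kernel-verified Lean document; each statement's English description precedes it below -/
import Mathlib

section
/- Let F be a continuous function on the torus T^n and let \xi in R^n be non-resonant (\kappa \cdot \xi \ne 0 for all nonzero \kappa in Z^n). Then the time average (1/T) \int_0^T F(\xi x) dx converges as T -> +\infty to the space average \int_{T^n} F(y) dy. -/
/-!
Weyl's argument. For each `T` the time average `g ↦ T⁻¹ ∫₀ᵀ g(tξ) dt` and the space average
`g ↦ ∫_{𝕋ⁿ} g` are continuous linear functionals on `C(𝕋ⁿ, ℂ)` of norm at most `1`, so the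
functions `g` whose time averages converge to their space average form a closed subspace. It
contains every character `e_κ(y) = exp(2πi κ·y)`: for `κ = 0` both averages are `1`, and for
`κ ≠ 0` the space average vanishes while the time average equals
`(exp(2πi (κ·ξ) T) - 1) / (2πi (κ·ξ) T)`, which tends to `0` because `κ·ξ ≠ 0`. By
Stone–Weierstrass the characters span a dense subspace, so the closed subspace is everything.
A continuous `ℤⁿ`-periodic `F` descends to a continuous function on the torus.
-/

open MeasureTheory Filter Topology Set Complex Real UnitAddTorus

noncomputable section

section IntegralComp

variable {α X : Type*} [TopologicalSpace α] [MeasurableSpace α] [OpensMeasurableSpace α]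
  [TopologicalSpace X] [CompactSpace X] (μ : Measure α) [IsFiniteMeasure μ] (φ : C(α, X))

lemma integrable_comp_continuousMap (g : C(X, ℂ)) : Integrable (fun a => g (φ a)) μ :=
  ((BoundedContinuousFunction.mkOfCompact g).compContinuous φ).integrable μ

def integralCompCLM : C(X, ℂ) →L[ℂ] ℂ :=
  LinearMap.mkContinuous
    { toFun g := ∫ a, g (φ a) ∂μ
      map_add' g h := integral_add (integrable_comp_continuousMap μ φ g)
        (integrable_comp_continuousMap μ φ h)
      map_smul' c g := integral_const_mul c _ }
    (μ.real univ) fun g => by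
      rw [mul_comm]
      exact norm_integral_le_of_norm_le_const (.of_forall fun a => g.norm_coe_le_norm (φ a))

lemma norm_integralCompCLM_le : ‖integralCompCLM μ φ‖ ≤ μ.real univ :=
  LinearMap.mkContinuous_norm_le _ measureReal_nonneg _

end IntegralComp

instance isFiniteMeasure_restrict_Icc_pi {ι : Type*} [Fintype ι] (a b : ι → ℝ) :
    IsFiniteMeasure (volume.restrict (Icc a b)) :=
  isFiniteMeasure_restrict.2 measure_Icc_lt_top.ne

lemma tendsto_inv_mul_integral_cexp_mul {c : ℂ} (hc : c ≠ 0) (hre : c.re ≤ 0) :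
    Tendsto (fun T : ℝ => (T : ℂ)⁻¹ * ∫ t in (0:ℝ)..T, cexp (c * t)) atTop (𝓝 0) := by
  have hbound : ∀ᶠ T : ℝ in atTop,
      ‖(T : ℂ)⁻¹ * ∫ t in (0:ℝ)..T, cexp (c * t)‖ ≤ 2 / ‖c‖ * T⁻¹ := by
    filter_upwards [eventually_gt_atTop 0] with T hT
    have hexp : ‖cexp (c * T)‖ ≤ 1 := by
      rw [Complex.norm_exp, Real.exp_le_one_iff, re_mul_ofReal]
      exact mul_nonpos_of_nonpos_of_nonneg hre hT.le
    have hnum : ‖cexp (c * T) - 1‖ ≤ 2 := by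
      calc ‖cexp (c * T) - 1‖ ≤ ‖cexp (c * T)‖ + ‖(1 : ℂ)‖ := norm_sub_le _ _
        _ ≤ 2 := by rw [norm_one]; linarith
    rw [integral_exp_mul_complex hc, ofReal_zero, mul_zero, Complex.exp_zero, norm_mul, norm_div,
      norm_inv, norm_real, Real.norm_of_nonneg hT.le, mul_comm]
    gcongr
  simpa using squeeze_zero_norm' hbound (by simpa using tendsto_inv_atTop_zero.const_mul (2 / ‖c‖))

lemma integral_Icc_cexp_two_pi_int_mul {k : ℤ} (hk : k ≠ 0) :
    ∫ t in Icc (0:ℝ) 1, cexp (2 * π * I * k * t) = 0 := by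
  have hc : 2 * π * I * k ≠ 0 := by simp [hk, Real.pi_ne_zero]
  rw [integral_Icc_eq_integral_Ioc, ← intervalIntegral.integral_of_le zero_le_one,
    integral_exp_mul_complex hc, ofReal_one, mul_one, ofReal_zero, mul_zero, Complex.exp_zero,
    show 2 * π * I * k = k * (2 * π * I) by ring, exp_int_mul_two_pi_mul_I, sub_self, zero_div]

namespace UnitAddTorus

variable {d : Type*}

def proj : C(d → ℝ, UnitAddTorus d) where
  toFun x i := x i
  continuous_toFun := by fun_prop

lemma isQuotientMap_proj : IsQuotientMap (proj : (d → ℝ) → UnitAddTorus d) :=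
  (IsOpenQuotientMap.piMap fun _ => QuotientAddGroup.isOpenQuotientMap_mk).isQuotientMap

lemma exists_int_of_proj_eq_proj {x y : d → ℝ} (h : proj x = proj y) :
    ∃ k : d → ℤ, y = x + fun i => (k i : ℝ) := by
  have hi (i : d) : ∃ k : ℤ, y i = x i + k := by
    obtain ⟨k, hk⟩ := QuotientAddGroup.eq.1 (congrFun h i)
    exact ⟨k, by simp only [zsmul_one] at hk; linarith⟩
  choose k hk using hi
  exact ⟨k, funext hk⟩

lemma factorsThrough_proj {Y : Type*} {F : (d → ℝ) → Y}
    (hF : ∀ (k : d → ℤ) (x : d → ℝ), F (x + fun i => (k i : ℝ)) = F x) :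
    Function.FactorsThrough F proj := fun x y h => by
  obtain ⟨k, rfl⟩ := exists_int_of_proj_eq_proj h
  exact (hF k x).symm

def linearFlow (ξ : d → ℝ) : C(ℝ, UnitAddTorus d) :=
  proj.comp ⟨fun t i => ξ i * t, by fun_prop⟩

lemma linearFlow_apply (ξ : d → ℝ) (t : ℝ) : linearFlow ξ t = proj fun i => ξ i * t := rfl

/-- Integrating over `Ioc 0 T` rather than `0..T` keeps the norm `≤ 1` also for `T < 0`;
for `T ≥ 0` this is `T⁻¹ ∫ t in 0..T` (`timeAverage_apply`). -/
def timeAverage (ξ : d → ℝ) (T : ℝ) : C(UnitAddTorus d, ℂ) →L[ℂ] ℂ :=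
  (T⁻¹ : ℂ) • integralCompCLM (volume.restrict (Ioc 0 T)) (linearFlow ξ)

lemma timeAverage_apply (ξ : d → ℝ) {T : ℝ} (hT : 0 ≤ T) (g : C(UnitAddTorus d, ℂ)) :
    timeAverage ξ T g = (T : ℂ)⁻¹ * ∫ t in (0:ℝ)..T, g (linearFlow ξ t) := by
  rw [intervalIntegral.integral_of_le hT]
  rfl

lemma norm_timeAverage_le (ξ : d → ℝ) (T : ℝ) : ‖timeAverage ξ T‖ ≤ 1 := by
  refine (ContinuousLinearMap.opNorm_smul_le _ _).trans ?_
  grw [norm_integralCompCLM_le, measureReal_restrict_apply_univ, Real.volume_real_Ioc, norm_inv,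
    norm_real, Real.norm_eq_abs]
  rcases le_or_gt T 0 with hT | hT
  · simp [hT]
  · simp [abs_of_pos hT, hT.le, hT.ne']

lemma timeAverage_one (ξ : d → ℝ) {T : ℝ} (hT : 0 < T) : timeAverage ξ T 1 = 1 := by
  simp [timeAverage_apply ξ hT.le, hT.ne']

variable [Fintype d]

def NonResonant (ξ : d → ℝ) : Prop := ∀ κ : d → ℤ, κ ≠ 0 → ∑ i, (κ i : ℝ) * ξ i ≠ 0

def spaceAverage : C(UnitAddTorus d, ℂ) →L[ℂ] ℂ :=
  integralCompCLM (volume.restrict (Icc 0 1)) proj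

lemma spaceAverage_apply (g : C(UnitAddTorus d, ℂ)) :
    spaceAverage g = ∫ x in Icc (0 : d → ℝ) 1, g (proj x) := rfl

lemma spaceAverage_one : spaceAverage (1 : C(UnitAddTorus d, ℂ)) = 1 := by
  simp [spaceAverage_apply, measureReal_def, Real.volume_Icc_pi]

lemma mFourier_proj (κ : d → ℤ) (x : d → ℝ) :
    mFourier κ (proj x) = ∏ i, cexp (2 * π * I * κ i * x i) := by
  simp [mFourier, proj]

lemma mFourier_linearFlow (κ : d → ℤ) (ξ : d → ℝ) (t : ℝ) :
    mFourier κ (linearFlow ξ t) = cexp (2 * π * (∑ i, κ i * ξ i : ℝ) * I * t) := by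
  rw [linearFlow_apply, mFourier_proj, ← Complex.exp_sum]
  push_cast
  rw [Finset.mul_sum, Finset.sum_mul, Finset.sum_mul]
  exact congrArg cexp (Finset.sum_congr rfl fun i _ => by ring)

lemma spaceAverage_mFourier {κ : d → ℤ} (hκ : κ ≠ 0) : spaceAverage (mFourier κ) = 0 := by
  obtain ⟨i, hi⟩ := Function.ne_iff.1 hκ
  rw [spaceAverage_apply, ← pi_univ_Icc, volume_pi, Measure.restrict_pi_pi]
  simp_rw [mFourier_proj]
  rw [integral_fintype_prod_eq_prod (fun i (t : ℝ) => cexp (2 * π * I * κ i * t))]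
  simp only [Pi.zero_apply, Pi.one_apply]
  exact Finset.prod_eq_zero (Finset.mem_univ i) (integral_Icc_cexp_two_pi_int_mul hi)

lemma tendsto_timeAverage_mFourier {ξ : d → ℝ} {κ : d → ℤ} (hκ : ∑ i, (κ i : ℝ) * ξ i ≠ 0) :
    Tendsto (fun T => timeAverage ξ T (mFourier κ)) atTop (𝓝 0) := by
  have hc : 2 * π * (∑ i, κ i * ξ i : ℝ) * I ≠ 0 :=
    mul_ne_zero (mul_ne_zero (mul_ne_zero two_ne_zero (ofReal_ne_zero.2 Real.pi_ne_zero))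
      (ofReal_ne_zero.2 hκ)) I_ne_zero
  refine (tendsto_inv_mul_integral_cexp_mul hc (by simp)).congr' ?_
  filter_upwards [eventually_ge_atTop 0] with T hT
  simp only [timeAverage_apply ξ hT, mFourier_linearFlow]

def tendstoSpaceAverageSubmodule (ξ : d → ℝ) : Submodule ℂ C(UnitAddTorus d, ℂ) where
  carrier := {g | Tendsto (fun T => timeAverage ξ T g) atTop (𝓝 (spaceAverage g))}
  add_mem' hg hh := by simpa using hg.add hh
  zero_mem' := by simp only [Set.mem_ofPred_eq, map_zero, tendsto_const_nhds]
  smul_mem' c _ hg := by simpa using hg.const_smul c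

lemma isClosed_tendstoSpaceAverageSubmodule (ξ : d → ℝ) :
    IsClosed (tendstoSpaceAverageSubmodule ξ : Set C(UnitAddTorus d, ℂ)) := by
  have hequi : Equicontinuous ((↑) ∘ timeAverage ξ) :=
    ((NormedSpace.equicontinuous_TFAE (timeAverage ξ)).out 5 1).1
      (⟨1, norm_timeAverage_le ξ⟩ : ∃ C, ∀ T, ‖timeAverage ξ T‖ ≤ C)
  exact hequi.isClosed_setOfPred_tendsto spaceAverage.continuous

lemma mFourier_mem_tendstoSpaceAverageSubmodule {ξ : d → ℝ} (hξ : NonResonant ξ) (κ : d → ℤ) :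
    mFourier κ ∈ tendstoSpaceAverageSubmodule ξ := by
  rcases eq_or_ne κ 0 with rfl | hκ
  · refine tendsto_const_nhds.congr' ?_
    filter_upwards [eventually_gt_atTop 0] with T hT
    rw [mFourier_zero, spaceAverage_one, timeAverage_one ξ hT]
  · simpa [tendstoSpaceAverageSubmodule, spaceAverage_mFourier hκ] using
      tendsto_timeAverage_mFourier (hξ κ hκ)

lemma tendstoSpaceAverageSubmodule_eq_top {ξ : d → ℝ} (hξ : NonResonant ξ) :
    tendstoSpaceAverageSubmodule ξ = ⊤ := by
  rw [eq_top_iff, ← span_mFourier_closure_eq_top]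
  refine Submodule.topologicalClosure_minimal _ ?_ (isClosed_tendstoSpaceAverageSubmodule ξ)
  exact Submodule.span_le.2 (range_subset_iff.2 (mFourier_mem_tendstoSpaceAverageSubmodule hξ))

theorem tendsto_timeAverage {ξ : d → ℝ} (hξ : NonResonant ξ) (g : C(UnitAddTorus d, ℂ)) :
    Tendsto (fun T => timeAverage ξ T g) atTop (𝓝 (spaceAverage g)) :=
  show g ∈ tendstoSpaceAverageSubmodule ξ from
    tendstoSpaceAverageSubmodule_eq_top hξ ▸ Submodule.mem_top

end UnitAddTorus

end

/-- For continuous `F` on the torus `𝕋^n` and non-resonant `ξ ∈ ℝ^n`, the time averages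
`(1/T) ∫₀^T F(ξ x) dx` converge, as `T → ∞`, to the space average `∫_{𝕋^n} F`. -/
theorem stmt4 {n : ℕ} (F : (Fin n → ℝ) → ℝ) (ξ : Fin n → ℝ)
    (hF : Continuous F)
    (hper : ∀ (k : Fin n → ℤ) (x : Fin n → ℝ), F (x + fun i => (k i : ℝ)) = F x)
    (hnr : ∀ κ : Fin n → ℤ, κ ≠ 0 → (∑ i, (κ i : ℝ) * ξ i) ≠ 0) :
    Filter.Tendsto (fun T : ℝ => (1/T) * ∫ x in (0:ℝ)..T, F (fun i => ξ i * x))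
      Filter.atTop (nhds (∫ y in Set.Icc (0 : Fin n → ℝ) 1, F y)) := by
  let Fℂ : C(Fin n → ℝ, ℂ) := ⟨fun x => F x, by fun_prop⟩
  have hFℂ : Function.FactorsThrough Fℂ proj := factorsThrough_proj fun k x => by simp [Fℂ, hper]
  let G := isQuotientMap_proj.lift Fℂ hFℂ
  have hG (x : Fin n → ℝ) : G (proj x) = F x :=
    DFunLike.congr_fun (isQuotientMap_proj.lift_comp Fℂ hFℂ) x
  have hspace : spaceAverage G = ↑(∫ y in Icc (0 : Fin n → ℝ) 1, F y) := by
    simp only [spaceAverage_apply, hG, integral_complex_ofReal]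
  have htime : ∀ᶠ T in atTop,
      timeAverage ξ T G = ↑((1/T) * ∫ x in (0:ℝ)..T, F fun i => ξ i * x) := by
    filter_upwards [eventually_ge_atTop 0] with T hT
    simp only [timeAverage_apply ξ hT, linearFlow_apply, hG, intervalIntegral.integral_ofReal]
    push_cast; ring
  rw [← tendsto_ofReal_iff, ← hspace]
  exact (tendsto_timeAverage hnr G).congr' htime
end

section
/- Let U in C(T^n) with U \ge 0, min U = 0, and \phi(\mu) = \int_{T^n} (2(\mu + U(y)))^{1/2} dy. If \int_{T^n} U(y)^{-1/2} dy = +\infty, then \lim_{\mu -> 0^+} (\phi(\mu) - \phi(0))/\mu = +\infty; consequently the inverse function \bar{H} of \phi satisfies \bar{H}'_+(p_0) = 0 where p_0 = \phi(0). -/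
/-!
Rationalizing, `(φ(μ) - φ(0)) / μ = ∫ 2 / (√(2(μ + U)) + √(2U))`, and as `μ ↓ 0` the integrand
increases to `(2U)^{-1/2}`, whose integral is infinite; by monotone convergence the quotient
tends to `+∞`. Since `φ` is continuous, a left inverse `H̄` of `φ` maps right neighbourhoods of
`p₀ = φ(0)` into right neighbourhoods of `0`, and the difference quotient of `H̄` at `p₀` is the
reciprocal of that of `φ` at `0`.
-/

open MeasureTheory Set Filter Topology
open scoped ENNReal

/-- `φ(μ) = ∫_{𝕋^n} √(2(μ + U(y))) dy`. -/
noncomputable def phiU {n : ℕ} (U : (Fin n → ℝ) → ℝ) (μ : ℝ) : ℝ :=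
  ∫ y in Set.Icc (0 : Fin n → ℝ) 1, Real.sqrt (2 * (μ + U y))

section MonotoneConvergence

variable {α : Type*} [MeasurableSpace α] {ν : Measure α} {g : ℝ → α → ℝ} {F : α → ℝ}

theorem exists_lt_integral_of_antitoneOn_of_not_integrable
    (hg_int : ∀ μ > 0, Integrable (g μ) ν) (hg_nonneg : ∀ μ > 0, 0 ≤ g μ)
    (hg_anti : ∀ y, AntitoneOn (g · y) (Ioi 0))
    (hg_lim : ∀ y, 0 < F y → Tendsto (g · y) (𝓝[>] 0) (𝓝 (F y)))
    (hF_meas : AEStronglyMeasurable F ν) (hF_nonneg : 0 ≤ F) (hF : ¬ Integrable F ν) (M : ℝ) :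
    ∃ μ > 0, M < ∫ y, g μ y ∂ν := by
  set u : ℕ → ℝ := fun k => 1 / (k + 1)
  have hu_pos : ∀ k, 0 < u k := fun k => by positivity
  have hu : Tendsto u atTop (𝓝[>] 0) :=
    tendsto_nhdsWithin_iff.2 ⟨tendsto_one_div_add_atTop_nhds_zero_nat, .of_forall hu_pos⟩
  have hu_anti : Antitone u := fun k l hkl => by
    simp only [u]
    gcongr
  have h_mono : ∀ y, Monotone fun k => ENNReal.ofReal (g (u k) y) := fun y k l hkl =>
    ENNReal.ofReal_le_ofReal (hg_anti y (hu_pos l) (hu_pos k) (hu_anti hkl))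
  have h_le : ∀ y, ENNReal.ofReal (F y) ≤ ⨆ k, ENNReal.ofReal (g (u k) y) := by
    intro y
    rcases (hF_nonneg y).eq_or_lt with h | h
    · simp [← h]
    · exact le_of_tendsto' ((ENNReal.continuous_ofReal.tendsto _).comp ((hg_lim y h).comp hu))
        fun k => le_iSup (fun k => ENNReal.ofReal (g (u k) y)) k
  have h_top : ⨆ k, ∫⁻ y, ENNReal.ofReal (g (u k) y) ∂ν = ∞ := by
    rw [← lintegral_iSup' (fun k => (hg_int _ (hu_pos k)).aemeasurable.ennreal_ofReal)
      (.of_forall h_mono)]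
    refine top_unique ((lintegral_mono h_le).trans' (top_le_iff.2 ?_))
    by_contra h
    exact hF ((lintegral_ofReal_ne_top_iff_integrable hF_meas (.of_forall hF_nonneg)).1 h)
  obtain ⟨k, hk⟩ := lt_iSup_iff.1 (h_top ▸ ENNReal.ofReal_lt_top : ENNReal.ofReal M < _)
  rw [← ofReal_integral_eq_lintegral_ofReal (hg_int _ (hu_pos k))
    (.of_forall (hg_nonneg _ (hu_pos k)))] at hk
  exact ⟨u k, hu_pos k, (ENNReal.ofReal_lt_ofReal_iff'.1 hk).1⟩

theorem tendsto_integral_nhdsGT_zero_atTop_of_antitoneOn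
    (hg_int : ∀ μ > 0, Integrable (g μ) ν) (hg_nonneg : ∀ μ > 0, 0 ≤ g μ)
    (hg_anti : ∀ y, AntitoneOn (g · y) (Ioi 0))
    (hg_lim : ∀ y, 0 < F y → Tendsto (g · y) (𝓝[>] 0) (𝓝 (F y)))
    (hF_meas : AEStronglyMeasurable F ν) (hF_nonneg : 0 ≤ F) (hF : ¬ Integrable F ν) :
    Tendsto (fun μ => ∫ y, g μ y ∂ν) (𝓝[>] 0) atTop := by
  refine tendsto_atTop.2 fun M => ?_
  obtain ⟨μ₀, hμ₀, hM⟩ := exists_lt_integral_of_antitoneOn_of_not_integrable hg_int hg_nonneg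
    hg_anti hg_lim hF_meas hF_nonneg hF M
  filter_upwards [Ioo_mem_nhdsGT hμ₀] with μ hμ
  exact hM.le.trans (integral_mono (hg_int μ₀ hμ₀) (hg_int μ hμ.1)
    fun y => hg_anti y hμ.1 hμ₀ hμ.2.le)

end MonotoneConvergence

section LeftInverse

variable {φ H : ℝ → ℝ} {a : ℝ}

theorem eventually_leftInverse_mem_Ioc {ε : ℝ} (hcont : ContinuousOn φ (Icc a ε))
    (hH : ∀ μ ∈ Icc a ε, H (φ μ) = μ) (haε : a ≤ ε) (hlt : φ a < φ ε) :
    ∀ᶠ p in 𝓝[>] φ a, H p ∈ Ioc a ε ∧ φ (H p) = p := by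
  filter_upwards [Ioo_mem_nhdsGT hlt] with p hp
  obtain ⟨μ, hμ, rfl⟩ := intermediate_value_Icc haε hcont (Ioo_subset_Icc_self hp)
  rw [hH μ hμ]
  refine ⟨⟨hμ.1.lt_of_ne ?_, hμ.2⟩, rfl⟩
  rintro rfl
  exact lt_irrefl _ hp.1

theorem tendsto_slope_leftInverse_nhdsGT (hcont : ContinuousOn φ (Ici a))
    (hH : ∀ μ ≥ a, H (φ μ) = μ)
    (hslope : Tendsto (fun μ => (φ μ - φ a) / (μ - a)) (𝓝[>] a) atTop) :
    Tendsto (fun p => (H p - H (φ a)) / (p - φ a)) (𝓝[>] φ a) (𝓝 0) := by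
  have hgt : ∀ᶠ μ in 𝓝[>] a, φ a < φ μ := by
    filter_upwards [hslope.eventually_gt_atTop 0, self_mem_nhdsWithin] with μ hpos hμ
    exact sub_pos.1 ((div_pos_iff_of_pos_right (sub_pos.2 hμ)).1 hpos)
  have key : ∀ ε, a < ε → φ a < φ ε → ∀ᶠ p in 𝓝[>] φ a, H p ∈ Ioc a ε ∧ φ (H p) = p :=
    fun ε hε hlt => eventually_leftInverse_mem_Ioc (hcont.mono Icc_subset_Ici_self)
      (fun μ hμ => hH μ hμ.1) hε.le hlt
  have hH_tendsto : Tendsto H (𝓝[>] φ a) (𝓝[>] a) := by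
    refine (nhdsGT_basis a).tendsto_right_iff.2 fun ε hε => ?_
    obtain ⟨δ, hδ_lt, hδ⟩ := (hgt.and (Ioo_mem_nhdsGT hε)).exists
    filter_upwards [key δ hδ.1 hδ_lt] with p hp
    exact ⟨hp.1.1, hp.1.2.trans_lt hδ.2⟩
  obtain ⟨ε, hlt, hε⟩ := (hgt.and self_mem_nhdsWithin).exists
  refine (hslope.inv_tendsto_atTop.comp hH_tendsto).congr' ?_
  filter_upwards [key ε hε hlt] with p hp
  rw [hH a le_rfl, Function.comp_apply, Pi.inv_apply, hp.2, inv_div]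

end LeftInverse

theorem sqrt_add_sqrt_pos {μ u : ℝ} (hμ : 0 < μ) (hu : 0 ≤ u) :
    0 < √(2 * (μ + u)) + √(2 * u) := by
  positivity

theorem sqrt_sub_sqrt_eq_mul_div {μ u : ℝ} (hμ : 0 < μ) (hu : 0 ≤ u) :
    √(2 * (μ + u)) - √(2 * u) = μ * (2 / (√(2 * (μ + u)) + √(2 * u))) := by
  have ha : √(2 * (μ + u)) ^ 2 = 2 * (μ + u) := Real.sq_sqrt (by linarith)
  have hb : √(2 * u) ^ 2 = 2 * u := Real.sq_sqrt (by linarith)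
  rw [← mul_div_assoc, eq_div_iff (sqrt_add_sqrt_pos hμ hu).ne']
  linear_combination ha - hb

section Phi

variable {n : ℕ} {U : (Fin n → ℝ) → ℝ}

noncomputable def slopeIntegrand (U : (Fin n → ℝ) → ℝ) (μ : ℝ) (y : Fin n → ℝ) : ℝ :=
  2 / (√(2 * (μ + U y)) + √(2 * U y))

theorem continuous_phiU (hU : Continuous U) : Continuous (phiU U) :=
  continuous_parametric_integral_of_continuous (by fun_prop) isCompact_Icc

theorem slopeIntegrand_nonneg (μ : ℝ) : 0 ≤ slopeIntegrand U μ := fun y => by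
  unfold slopeIntegrand
  positivity

theorem continuous_slopeIntegrand (hU : Continuous U) (hU0 : ∀ y, 0 ≤ U y) {μ : ℝ}
    (hμ : 0 < μ) : Continuous (slopeIntegrand U μ) :=
  continuous_const.div (by fun_prop) fun y => (sqrt_add_sqrt_pos hμ (hU0 y)).ne'

theorem antitoneOn_slopeIntegrand (hU0 : ∀ y, 0 ≤ U y) (y : Fin n → ℝ) :
    AntitoneOn (slopeIntegrand U · y) (Ioi 0) := fun μ hμ μ' _ h => by
  have := sqrt_add_sqrt_pos hμ (hU0 y)
  dsimp only [slopeIntegrand]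
  gcongr

theorem tendsto_slopeIntegrand_nhdsGT_zero {y : Fin n → ℝ} (hy : 0 < slopeIntegrand U 0 y) :
    Tendsto (slopeIntegrand U · y) (𝓝[>] 0) (𝓝 (slopeIntegrand U 0 y)) := by
  have hden : √(2 * (0 + U y)) + √(2 * U y) ≠ 0 := fun h => by
    simp only [slopeIntegrand, h, div_zero, lt_irrefl] at hy
  have hcont : ContinuousAt (slopeIntegrand U · y) 0 :=
    continuousAt_const.div (by fun_prop) hden
  exact hcont.tendsto.mono_left nhdsWithin_le_nhds

-- Where `U y = 0` both sides vanish, by the conventions `2 / 0 = 0` and `0 ^ (-1/2) = 0`.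
theorem slopeIntegrand_zero (hU0 : ∀ y, 0 ≤ U y) :
    slopeIntegrand U 0 = fun y => (√2)⁻¹ * U y ^ (-(1:ℝ)/2) := by
  funext y
  rw [slopeIntegrand, zero_add, Real.sqrt_mul zero_le_two, neg_div, Real.rpow_neg (hU0 y),
    ← Real.sqrt_eq_rpow]
  ring

theorem phiU_sub_phiU_zero (hU : Continuous U) (hU0 : ∀ y, 0 ≤ U y) {μ : ℝ} (hμ : 0 < μ) :
    phiU U μ - phiU U 0 = μ * ∫ y in Icc (0 : Fin n → ℝ) 1, slopeIntegrand U μ y := by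
  have hint : ∀ ν, IntegrableOn (fun y => √(2 * (ν + U y))) (Icc (0 : Fin n → ℝ) 1) :=
    fun ν => (by fun_prop : Continuous _).continuousOn.integrableOn_compact isCompact_Icc
  rw [phiU, phiU, ← integral_sub (hint μ) (hint 0), ← integral_const_mul]
  refine integral_congr_ae (.of_forall fun y => ?_)
  simp only [zero_add]
  exact sqrt_sub_sqrt_eq_mul_div hμ (hU0 y)

theorem tendsto_phiU_slope (hU : Continuous U) (hU0 : ∀ y, 0 ≤ U y)
    (hdiv : ¬ IntegrableOn (fun y => (U y) ^ (-(1:ℝ)/2)) (Icc (0 : Fin n → ℝ) 1) volume) :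
    Tendsto (fun μ => (phiU U μ - phiU U 0) / μ) (𝓝[>] 0) atTop := by
  have hF : ¬ IntegrableOn (slopeIntegrand U 0) (Icc (0 : Fin n → ℝ) 1) := by
    rwa [slopeIntegrand_zero hU0, IntegrableOn,
      integrable_const_mul_iff (by simp : IsUnit (√2)⁻¹)]
  have hF_meas : AEStronglyMeasurable (slopeIntegrand U 0) (volume.restrict (Icc 0 1)) := by
    rw [slopeIntegrand_zero hU0]
    exact (hU.measurable.pow_const _).const_mul _ |>.aestronglyMeasurable
  refine (tendsto_integral_nhdsGT_zero_atTop_of_antitoneOn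
    (fun μ hμ => (continuous_slopeIntegrand hU hU0 hμ).continuousOn.integrableOn_compact
      isCompact_Icc)
    (fun μ _ => slopeIntegrand_nonneg μ) (antitoneOn_slopeIntegrand hU0)
    (fun y => tendsto_slopeIntegrand_nhdsGT_zero) hF_meas (slopeIntegrand_nonneg 0) hF).congr' ?_
  filter_upwards [self_mem_nhdsWithin] with μ hμ
  rw [phiU_sub_phiU_zero hU hU0 hμ, mul_div_cancel_left₀ _ (ne_of_gt hμ)]

end Phi

theorem stmt13_general {n : ℕ} (U : (Fin n → ℝ) → ℝ) (hU : Continuous U)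
    (hU0 : ∀ y, 0 ≤ U y)
    (hdiv : ¬ IntegrableOn (fun y => (U y) ^ (-(1:ℝ)/2))
      (Set.Icc (0 : Fin n → ℝ) 1) volume) :
    Filter.Tendsto (fun μ => (phiU U μ - phiU U 0) / μ)
      (nhdsWithin 0 (Set.Ioi 0)) Filter.atTop ∧
    ∀ Hbar : ℝ → ℝ, (∀ μ ≥ (0:ℝ), Hbar (phiU U μ) = μ) →
      Filter.Tendsto (fun p => (Hbar p - Hbar (phiU U 0)) / (p - phiU U 0))
        (nhdsWithin (phiU U 0) (Set.Ioi (phiU U 0))) (nhds 0) := by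
  have hslope := tendsto_phiU_slope hU hU0 hdiv
  refine ⟨hslope, fun Hbar hHbar => ?_⟩
  exact tendsto_slope_leftInverse_nhdsGT (continuous_phiU hU).continuousOn hHbar
    (by simpa only [sub_zero] using hslope)

/-- If `∫_{𝕋^n} U^{-1/2} = +∞`, then `(φ(μ) - φ(0))/μ → +∞` as `μ → 0⁺`; consequently the
inverse function `H̄` of `φ` has vanishing right derivative at `p₀ = φ(0)`. -/
theorem stmt13 {n : ℕ} (U : (Fin n → ℝ) → ℝ) (hU : Continuous U)
    (hper : ∀ (k : Fin n → ℤ) (x : Fin n → ℝ), U (x + fun i => (k i : ℝ)) = U x)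
    (hU0 : ∀ y, 0 ≤ U y) (hmin : ∃ y, U y = 0)
    (hdiv : ¬ IntegrableOn (fun y => (U y) ^ (-(1:ℝ)/2))
      (Set.Icc (0 : Fin n → ℝ) 1) volume) :
    Filter.Tendsto (fun μ => (phiU U μ - phiU U 0) / μ)
      (nhdsWithin 0 (Set.Ioi 0)) Filter.atTop ∧
    ∀ Hbar : ℝ → ℝ, (∀ μ ≥ (0:ℝ), Hbar (phiU U μ) = μ) →
      Filter.Tendsto (fun p => (Hbar p - Hbar (phiU U 0)) / (p - phiU U 0))
        (nhdsWithin (phiU U 0) (Set.Ioi (phiU U 0))) (nhds 0) :=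
  stmt13_general U hU hU0 hdiv
end
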